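/- Let T be a directed tree graphical model on a finite rooted tree, and define max-messages by replacing every sum over k in the domain of X_t in the message-passing recursion (including at the root) by a maximum over k. Then for every subset Y ⊆ V of observed vertices with assignment y, the resulting root value equals the maximum of T(x) over all total assignments x whose restriction to Y equals y; i.e., max-product message passing computes the value of the MAP query. -/

import Mathlib

attribute [local instance] Classical.propDecidable

noncomputable section

/-- Indicator variable `[v]_k` relative to a partial assignment `y`
(`y v = none` means `v` is unobserved). -/
def Indicator {Var : Type} (y : Var → Option ℕ) (v : Var) (k : ℕ) : ℝ :=
  match y v with
  | none => 1
  | some i => if i = k then 1 else 0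

/-- A directed tree graphical model on a finite rooted tree: `par v` is the parent of `v`
(`none` exactly at the root), acyclicity/orientation is encoded by the strictly
increasing `rank` towards the root, each vertex `v` carries a variable with domain
`{0, …, dom v - 1}`, `Proot` is the distribution at the root and `Pcond t k j` the
conditional table `P_{par t, t}(k | j)`. -/
structure TreeGM where
  V : Type
  fintypeV : Fintype V
  decEqV : DecidableEq V
  root : V
  par : V → Option V
  par_root : par root = none
  par_of_ne_root : ∀ v, v ≠ root → par v ≠ none
  rank : V → ℕ
  rank_lt : ∀ t s, par t = some s → rank t < rank s
  dom : V → ℕ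
  dom_pos : ∀ v, 0 < dom v
  Proot : ℕ → ℝ
  Pcond : V → ℕ → ℕ → ℝ

attribute [instance] TreeGM.fintypeV TreeGM.decEqV

namespace TreeGM

/-- The parameters of the tree model are probability distributions. -/
structure IsProb (T : TreeGM) : Prop where
  root_nonneg : ∀ k, 0 ≤ T.Proot k
  root_sum : ∑ k ∈ Finset.range (T.dom T.root), T.Proot k = 1
  cond_nonneg : ∀ t k j, 0 ≤ T.Pcond t k j
  cond_sum : ∀ t s, T.par t = some s → ∀ j < T.dom s,
    ∑ k ∈ Finset.range (T.dom t), T.Pcond t k j = 1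

/-- The children of a vertex. -/
def children (T : TreeGM) (t : T.V) : Finset T.V :=
  Finset.univ.filter fun q => T.par q = some t

/-- The value `T(x)` of a total assignment `x`. -/
def val (T : TreeGM) (x : ∀ v, Fin (T.dom v)) : ℝ :=
  T.Proot (x T.root) *
    ∏ t : T.V,
      match T.par t with
      | some s => T.Pcond t (x t) (x s)
      | none => 1

/-- Sum-product message passing with fuel (never exhausted thanks to `rank_lt`):
`msgAux T y n t j` is the message `μ_{t→par t; j}` under partial assignment `y`. -/
def msgAux (T : TreeGM) (y : T.V → Option ℕ) : ℕ → T.V → ℕ → ℝ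
  | 0, _, _ => 1
  | n + 1, t, j =>
    ∑ k ∈ Finset.range (T.dom t),
      (match T.par t with
        | some _ => T.Pcond t k j
        | none => T.Proot k) *
        Indicator y t k *
        ∏ q ∈ T.children t, msgAux T y n q k

/-- The value computed at the root by leaf-to-root sum-product message passing. -/
def rootValue (T : TreeGM) (y : T.V → Option ℕ) : ℝ :=
  T.msgAux y (T.rank T.root + 1) T.root 0

/-- Max-product message passing: every sum over the domain is replaced by a maximum. -/
def maxMsgAux (T : TreeGM) (y : T.V → Option ℕ) : ℕ → T.V → ℕ → ℝ
  | 0, _, _ => 1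
  | n + 1, t, j =>
    (Finset.range (T.dom t)).sup'
      (Finset.nonempty_range_iff.mpr (T.dom_pos t).ne') fun k =>
      (match T.par t with
        | some _ => T.Pcond t k j
        | none => T.Proot k) *
        Indicator y t k *
        ∏ q ∈ T.children t, maxMsgAux T y n q k

/-- The value computed at the root by leaf-to-root max-product message passing. -/
def maxRootValue (T : TreeGM) (y : T.V → Option ℕ) : ℝ :=
  T.maxMsgAux y (T.rank T.root + 1) T.root 0

end TreeGM

/-!
Let `subtreeValue y t j x` be the product of the local factors of the subtree of `t`, given that
the parent of `t` takes the value `j`. By induction on the height of `t`, the max-message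
`μ_{t→s;j}` is the maximum of `subtreeValue y t j` over all total assignments: the subtrees of
distinct children are disjoint, so their factors depend on disjoint sets of coordinates and
can be maximised independently (nonnegativity lets the maximum commute with the products),
after which the maximum over the value `k` of `t` is absorbed into the maximum over
assignments. At the root the product of all factors is `T(x)` times the indicators of `y`,
which vanish exactly off the assignments extending `y`; as `T(x) ≥ 0` and such an assignment
exists, the maximum is the MAP value.
-/

open Finset Relation

lemma indicator_eq_ite {Var : Type} (y : Var → Option ℕ) (v : Var) (k : ℕ) :
    Indicator y v k = if ∀ i, y v = some i → i = k then 1 else 0 := by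
  unfold Indicator
  cases y v <;> simp

theorem DependsOn.finset_prod {ι κ M : Type*} {β : ι → Type*} [CommMonoid M] {C : Finset κ}
    {F : κ → (∀ i, β i) → M} {s : Set ι} (hF : ∀ c ∈ C, DependsOn (F c) s) :
    DependsOn (fun x => ∏ c ∈ C, F c x) s :=
  fun _ _ h => prod_congr rfl fun c hc => hF c hc h

section SupProd

variable {ι R : Type*} {β : ι → Type*} [Fintype (∀ i, β i)] [Nonempty (∀ i, β i)]
  [CommSemiring R] [LinearOrder R] [IsOrderedRing R]

theorem Finset.sup'_univ_mul_of_dependsOn {f g : (∀ i, β i) → R} {s : Set ι}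
    (hf : DependsOn f s) (hg : DependsOn g sᶜ) (hf0 : 0 ≤ f) (hg0 : 0 ≤ g) :
    univ.sup' univ_nonempty (fun x => f x * g x) =
      univ.sup' univ_nonempty f * univ.sup' univ_nonempty g := by
  classical
  refine le_antisymm (sup'_mul_le_mul_sup'_of_nonneg (fun x _ => hf0 x) (fun x _ => hg0 x) _) ?_
  obtain ⟨xf, -, hxf⟩ := exists_mem_eq_sup' univ_nonempty f
  obtain ⟨xg, -, hxg⟩ := exists_mem_eq_sup' univ_nonempty g
  have hf_glue : f (s.piecewise xf xg) = f xf := hf fun i hi => s.piecewise_eq_of_mem _ _ hi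
  have hg_glue : g (s.piecewise xf xg) = g xg := hg fun i hi => s.piecewise_eq_of_notMem _ _ hi
  rw [hxf, hxg, ← hf_glue, ← hg_glue]
  exact le_sup' (fun x => f x * g x) (mem_univ _)

theorem Finset.sup'_univ_prod_of_dependsOn {κ : Type*} (C : Finset κ) {S : κ → Set ι}
    {F : κ → (∀ i, β i) → R} (hS : (C : Set κ).PairwiseDisjoint S)
    (hF : ∀ c ∈ C, DependsOn (F c) (S c)) (hF0 : ∀ c ∈ C, 0 ≤ F c) :
    univ.sup' univ_nonempty (fun x => ∏ c ∈ C, F c x) =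
      ∏ c ∈ C, univ.sup' univ_nonempty (F c) := by
  classical
  induction C using Finset.induction_on with
  | empty => simp
  | insert a C ha ih =>
    have hC : ∀ c ∈ C, c ∈ insert a C := fun c hc => mem_insert_of_mem hc
    rw [prod_insert ha, ← ih (hS.subset (by simp)) (fun c hc => hF c (hC c hc))
      (fun c hc => hF0 c (hC c hc))]
    simp_rw [prod_insert ha]
    have hrest : DependsOn (fun x => ∏ c ∈ C, F c x) (S a)ᶜ :=
      DependsOn.finset_prod fun c hc => (hF c (hC c hc)).mono fun i hi =>
        Set.disjoint_left.mp (hS (hC c hc) (mem_insert_self a C) (ne_of_mem_of_not_mem hc ha)) hi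
    exact sup'_univ_mul_of_dependsOn (hF a (mem_insert_self a C)) hrest
      (hF0 a (mem_insert_self a C)) fun x => prod_nonneg fun c hc => hF0 c (hC c hc) x

end SupProd

theorem Finset.sup'_range_sup'_univ_of_dependsOn {ι R : Type*} [LinearOrder R] {d : ι → ℕ}
    [Fintype (∀ i, Fin (d i))] [Nonempty (∀ i, Fin (d i))] (t : ι)
    (hd : (range (d t)).Nonempty) (H : ℕ → (∀ i, Fin (d i)) → R)
    (hH : ∀ k, DependsOn (H k) {t}ᶜ) :
    (range (d t)).sup' hd (fun k => univ.sup' univ_nonempty (H k)) =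
      univ.sup' univ_nonempty (fun x => H (x t) x) := by
  classical
  refine le_antisymm (sup'_le _ _ fun k hk => sup'_le _ _ fun x _ => ?_)
    (sup'_le _ _ fun x _ => (le_sup' (H (x t)) (mem_univ x)).trans
      (le_sup' (fun k => univ.sup' univ_nonempty (H k)) (mem_range.mpr (x t).isLt)))
  set x' := Function.update x t ⟨k, mem_range.mp hk⟩
  have hx' : H k x = H (x' t) x' := by
    rw [show (x' t : ℕ) = k by simp [x']]
    exact hH k fun i hi => (Function.update_of_ne hi _ _).symm
  exact hx' ▸ le_sup' (fun x => H (x t) x) (mem_univ x')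

namespace TreeGM

variable (T : TreeGM)

instance : Nonempty (∀ v : T.V, Fin (T.dom v)) := ⟨fun v => ⟨0, T.dom_pos v⟩⟩

def IsChild (q t : T.V) : Prop := T.par q = some t

def subtree (t : T.V) : Finset T.V :=
  univ.filter fun v => ReflTransGen T.IsChild v t

variable {T}

lemma mem_children {q t : T.V} : q ∈ T.children t ↔ T.IsChild q t := by
  simp [children, IsChild]

variable (T) in
lemma isChild_rightUnique : Relator.RightUnique T.IsChild :=
  fun _ _ _ hb hc => Option.some_injective _ (hb.symm.trans hc)

lemma rank_le_of_reflTransGen {v t : T.V} (h : ReflTransGen T.IsChild v t) :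
    T.rank v ≤ T.rank t := by
  induction h with
  | refl => exact le_rfl
  | tail _ hst ih => exact ih.trans (T.rank_lt _ _ hst).le

lemma reflTransGen_root (v : T.V) : ReflTransGen T.IsChild v T.root := by
  induction hd : univ.sup T.rank - T.rank v using Nat.strong_induction_on generalizing v with
  | _ d ih =>
    by_cases hv : v = T.root
    · exact hv ▸ ReflTransGen.refl
    obtain ⟨s, hs⟩ := Option.ne_none_iff_exists'.mp (T.par_of_ne_root v hv)
    have hlt := T.rank_lt v s hs
    have hle : T.rank s ≤ univ.sup T.rank := le_sup (mem_univ s)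
    exact ReflTransGen.head hs (ih _ (by omega) s rfl)

lemma mem_subtree {v t : T.V} : v ∈ T.subtree t ↔ ReflTransGen T.IsChild v t := by
  simp [subtree]

lemma self_mem_subtree (t : T.V) : t ∈ T.subtree t :=
  mem_subtree.mpr ReflTransGen.refl

variable (T) in
lemma subtree_root : T.subtree T.root = univ :=
  eq_univ_of_forall fun v => mem_subtree.mpr (reflTransGen_root v)

lemma notMem_subtree_of_isChild {q t : T.V} (h : T.IsChild q t) : t ∉ T.subtree q :=
  fun ht => (rank_le_of_reflTransGen (mem_subtree.mp ht)).not_gt (T.rank_lt q t h)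

lemma exists_isChild_mem_subtree {v t : T.V} (hv : v ∈ T.subtree t) (hvt : v ≠ t) :
    ∃ s, T.IsChild v s ∧ s ∈ T.subtree t := by
  obtain rfl | ⟨s, hvs, hst⟩ := (mem_subtree.mp hv).cases_head
  · exact absurd rfl hvt
  · exact ⟨s, hvs, mem_subtree.mpr hst⟩

lemma erase_subtree_eq_biUnion (t : T.V) :
    (T.subtree t).erase t = (T.children t).biUnion T.subtree := by
  ext v
  simp only [mem_erase, mem_biUnion, mem_children]
  constructor
  · rintro ⟨hvt, hv⟩
    obtain rfl | ⟨q, hvq, hqt⟩ := (mem_subtree.mp hv).cases_tail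
    · exact absurd rfl hvt
    · exact ⟨q, hqt, mem_subtree.mpr hvq⟩
  · rintro ⟨q, hqt, hvq⟩
    exact ⟨fun hvt => notMem_subtree_of_isChild hqt (hvt ▸ hvq),
      mem_subtree.mpr ((mem_subtree.mp hvq).tail hqt)⟩

lemma eq_of_isChild_of_reflTransGen {q q' t : T.V} (hq : T.IsChild q t) (hq' : T.IsChild q' t)
    (h : ReflTransGen T.IsChild q q') : q = q' := by
  obtain rfl | ⟨s, hqs, hsq'⟩ := h.cases_head
  · rfl
  · obtain rfl := T.isChild_rightUnique hq hqs
    exact absurd (rank_le_of_reflTransGen hsq') (T.rank_lt q' t hq').not_ge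

lemma pairwiseDisjoint_subtree (t : T.V) :
    (T.children t : Set T.V).PairwiseDisjoint T.subtree := by
  intro q hq q' hq' hne
  rw [mem_coe, mem_children] at hq hq'
  refine disjoint_left.mpr fun v hv hv' => hne ?_
  rcases (mem_subtree.mp hv).total_of_right_unique T.isChild_rightUnique
    (mem_subtree.mp hv') with h | h
  · exact eq_of_isChild_of_reflTransGen hq hq' h
  · exact (eq_of_isChild_of_reflTransGen hq' hq h).symm

variable (T) (y : T.V → Option ℕ)

def weight (t : T.V) (j k : ℕ) : ℝ :=
  (match T.par t with
    | some _ => T.Pcond t k j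
    | none => T.Proot k) * Indicator y t k

/-- The root gets the dummy parent value `0`, the `j = 0` that `maxRootValue` passes to it. -/
def parentValue (x : ∀ v, Fin (T.dom v)) (v : T.V) : ℕ :=
  match T.par v with
  | some s => x s
  | none => 0

def factor (x : ∀ v, Fin (T.dom v)) (v : T.V) : ℝ :=
  T.weight y v (T.parentValue x v) (x v)

def subtreeValue (t : T.V) (j : ℕ) (x : ∀ v, Fin (T.dom v)) : ℝ :=
  T.weight y t j (x t) * ∏ v ∈ (T.subtree t).erase t, T.factor y x v

variable {T}

lemma weight_nonneg (hT : T.IsProb) (t : T.V) (j k : ℕ) : 0 ≤ T.weight y t j k := by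
  refine mul_nonneg ?_ ?_
  · cases T.par t with
    | some _ => exact hT.cond_nonneg t k j
    | none => exact hT.root_nonneg k
  · rw [indicator_eq_ite]
    split_ifs <;> norm_num

lemma subtreeValue_nonneg (hT : T.IsProb) (t : T.V) (j : ℕ) : 0 ≤ T.subtreeValue y t j :=
  fun _ => mul_nonneg (weight_nonneg y hT _ _ _)
    (prod_nonneg fun _ _ => weight_nonneg y hT _ _ _)

lemma factor_of_isChild {q t : T.V} (h : T.IsChild q t) (x : ∀ v, Fin (T.dom v)) :
    T.factor y x q = T.weight y q (x t) (x q) := by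
  simp only [factor, parentValue, show T.par q = some t from h]

lemma subtreeValue_eq_mul_prod_children (t : T.V) (j : ℕ) (x : ∀ v, Fin (T.dom v)) :
    T.subtreeValue y t j x =
      T.weight y t j (x t) * ∏ q ∈ T.children t, T.subtreeValue y q (x t) x := by
  rw [subtreeValue, erase_subtree_eq_biUnion, prod_biUnion (pairwiseDisjoint_subtree t)]
  congr 1
  refine prod_congr rfl fun q hq => ?_
  rw [subtreeValue, ← factor_of_isChild y (mem_children.mp hq),
    mul_prod_erase _ _ (self_mem_subtree q)]

lemma dependsOn_subtreeValue (t : T.V) (j : ℕ) :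
    DependsOn (T.subtreeValue y t j) (T.subtree t) := by
  intro x x' h
  rw [subtreeValue, subtreeValue, h t (self_mem_subtree t)]
  congr 1
  refine prod_congr rfl fun v hv => ?_
  obtain ⟨hvt, hv⟩ := mem_erase.mp hv
  obtain ⟨s, hvs, hs⟩ := exists_isChild_mem_subtree hv hvt
  rw [factor_of_isChild y hvs, factor_of_isChild y hvs, h v hv, h s hs]

theorem maxMsgAux_eq_sup'_subtreeValue (hT : T.IsProb) {n : ℕ} {t : T.V} (j : ℕ)
    (ht : T.rank t < n) :
    T.maxMsgAux y n t j = univ.sup' univ_nonempty (T.subtreeValue y t j) := by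
  induction n generalizing t j with
  | zero => exact absurd ht (Nat.not_lt_zero _)
  | succ n ih =>
    have hchildren : ∀ q ∈ T.children t, ∀ k,
        T.maxMsgAux y n q k = univ.sup' univ_nonempty (T.subtreeValue y q k) := fun q hq k =>
      ih k ((T.rank_lt q t (mem_children.mp hq)).trans_le (Nat.lt_succ_iff.mp ht))
    have hdep : ∀ k, DependsOn
        (fun x => T.weight y t j k * ∏ q ∈ T.children t, T.subtreeValue y q k x) {t}ᶜ :=
      fun k x x' h => congrArg _ <| DependsOn.finset_prod (fun q hq =>
        (dependsOn_subtreeValue y q k).mono fun v hv (hvt : v = t) =>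
          notMem_subtree_of_isChild (mem_children.mp hq) (hvt ▸ hv)) h
    have hdisj : (T.children t : Set T.V).PairwiseDisjoint fun q => (T.subtree q : Set T.V) :=
      pairwiseDisjoint_coe.mpr (pairwiseDisjoint_subtree t)
    calc T.maxMsgAux y (n + 1) t j
        = (range (T.dom t)).sup' (nonempty_range_iff.mpr (T.dom_pos t).ne') fun k =>
            T.weight y t j k * ∏ q ∈ T.children t, T.maxMsgAux y n q k := rfl
      _ = (range (T.dom t)).sup' (nonempty_range_iff.mpr (T.dom_pos t).ne') fun k =>
            univ.sup' univ_nonempty fun x =>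
              T.weight y t j k * ∏ q ∈ T.children t, T.subtreeValue y q k x := by
          refine sup'_congr _ rfl fun k _ => ?_
          rw [prod_congr rfl fun q hq => hchildren q hq k,
            ← sup'_univ_prod_of_dependsOn _ hdisj
              (fun q _ => dependsOn_subtreeValue y q k) (fun q _ => subtreeValue_nonneg y hT q k),
            mul₀_sup' (weight_nonneg y hT t j k)]
      _ = univ.sup' univ_nonempty fun x =>
            T.weight y t j (x t) * ∏ q ∈ T.children t, T.subtreeValue y q (x t) x :=
          sup'_range_sup'_univ_of_dependsOn t _ _ hdep
      _ = univ.sup' univ_nonempty (T.subtreeValue y t j) :=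
          sup'_congr _ rfl fun x _ => (subtreeValue_eq_mul_prod_children y t j x).symm

variable (T) in
def Extends (x : ∀ v, Fin (T.dom v)) : Prop :=
  ∀ (v : T.V) (i : ℕ), y v = some i → (x v : ℕ) = i

lemma exists_extends (hy : ∀ v i, y v = some i → i < T.dom v) : ∃ x, T.Extends y x := by
  refine ⟨fun v => ⟨(y v).getD 0, ?_⟩, fun v i hv => by simp [hv]⟩
  cases hv : y v with
  | none => exact T.dom_pos v
  | some i => exact hy v i hv

lemma prod_indicator_eq_ite (x : ∀ v, Fin (T.dom v)) :
    ∏ v, Indicator y v (x v) = if T.Extends y x then 1 else 0 := by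
  simp only [indicator_eq_ite, prod_boole, Extends, mem_univ, true_implies, eq_comm]

lemma val_nonneg (hT : T.IsProb) (x : ∀ v, Fin (T.dom v)) : 0 ≤ T.val x :=
  mul_nonneg (hT.root_nonneg _) <| prod_nonneg fun v _ => by
    cases T.par v with
    | some s => exact hT.cond_nonneg v _ _
    | none => exact zero_le_one

lemma factor_eq_ite_mul (x : ∀ v, Fin (T.dom v)) (v : T.V) :
    T.factor y x v = (if v = T.root then T.Proot (x T.root) else 1) *
      (match T.par v with
        | some s => T.Pcond v (x v) (x s)
        | none => 1) * Indicator y v (x v) := by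
  by_cases hv : v = T.root
  · subst hv
    simp only [factor, weight, T.par_root, if_true, mul_one]
  · obtain ⟨s, hs⟩ := Option.ne_none_iff_exists'.mp (T.par_of_ne_root v hv)
    simp only [factor, weight, parentValue, hs, hv, if_false, one_mul]

lemma prod_factor_eq_val_mul (x : ∀ v, Fin (T.dom v)) :
    ∏ v, T.factor y x v = T.val x * ∏ v, Indicator y v (x v) := by
  simp only [factor_eq_ite_mul, prod_mul_distrib, prod_ite_eq', mem_univ, if_true, val]

lemma subtreeValue_root (x : ∀ v, Fin (T.dom v)) :
    T.subtreeValue y T.root 0 x = ∏ v, T.factor y x v := by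
  have hroot : T.factor y x T.root = T.weight y T.root 0 (x T.root) := by
    simp only [factor, parentValue, T.par_root]
  rw [subtreeValue, subtree_root, ← hroot, mul_prod_erase _ _ (mem_univ _)]

theorem maxRootValue_eq_sup' (hT : T.IsProb) :
    T.maxRootValue y = univ.sup' univ_nonempty fun x => if T.Extends y x then T.val x else 0 := by
  rw [maxRootValue, maxMsgAux_eq_sup'_subtreeValue y hT 0 (Nat.lt_succ_self _)]
  refine sup'_congr _ rfl fun x _ => ?_
  rw [subtreeValue_root, prod_factor_eq_val_mul, prod_indicator_eq_ite, mul_ite, mul_one, mul_zero]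

end TreeGM

/-- Let `T` be a directed tree graphical model on a finite rooted tree
and replace every sum over the domain in the message-passing recursion (including at the
root) by a maximum.  Then for every set of observed vertices with (in-domain) assignment
`y`, the resulting root value is the maximum of `T(x)` over all total assignments `x`
whose restriction to the observed vertices equals `y`: max-product message passing
computes the value of the MAP query. -/
theorem treegm_max_product_computes_map (T : TreeGM) (hT : T.IsProb)
    (y : T.V → Option ℕ) (hy : ∀ v i, y v = some i → i < T.dom v) :
    IsGreatest
      {r : ℝ | ∃ x : ∀ v : T.V, Fin (T.dom v),
        (∀ (v : T.V) (i : ℕ), y v = some i → (x v : ℕ) = i) ∧ r = T.val x}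
      (T.maxRootValue y) := by
  have hroot := T.maxRootValue_eq_sup' y hT
  have hle : ∀ x, T.Extends y x → T.val x ≤ T.maxRootValue y := fun x hx => by
    rw [hroot, ← if_pos hx (t := T.val x) (e := 0)]
    exact le_sup' (fun x => if T.Extends y x then T.val x else 0) (mem_univ x)
  refine ⟨?_, fun r ⟨x, hx, hr⟩ => hr ▸ hle x hx⟩
  obtain ⟨x₀, -, hx₀⟩ :=
    exists_mem_eq_sup' univ_nonempty fun x => if T.Extends y x then T.val x else 0
  rw [hx₀] at hroot
  by_cases h₀ : T.Extends y x₀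
  · exact ⟨x₀, h₀, by rw [hroot, if_pos h₀]⟩
  -- otherwise the maximum is `0`, attained by any extension of `y` since `T.val ≥ 0`
  obtain ⟨x₁, hx₁⟩ := TreeGM.exists_extends y hy
  refine ⟨x₁, hx₁, le_antisymm ?_ (hle x₁ hx₁)⟩
  rw [hroot, if_neg h₀]
  exact TreeGM.val_nonneg hT x₁
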